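/- Let p = softmax(z), fix y*, and define the update direction Δz_k = δ_{k,y*} - p_k. Then the directional derivative of SC(softmax(z + η Δz)) at η = 0 equals p_{y*} - Σ_k p_k², where SC(p) = -(1/V) Σ_j log(V p_j). -/

import Mathlib

noncomputable def softmax {V : ℕ} (z : Fin V → ℝ) : Fin V → ℝ :=
  fun j => Real.exp (z j) / ∑ l, Real.exp (z l)

noncomputable def SC {V : ℕ} (p : Fin V → ℝ) : ℝ :=
  -(1 / (V : ℝ)) * ∑ j, Real.log ((V : ℝ) * p j)

/-!
Since `log (V * softmax w j) = log V + w j - log ∑ exp w`, self-certainty of `softmax w` is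
log-sum-exp of `w` up to `-(1/V) ∑ w - log V`. The update direction sums to zero, so along the line
`z + η Δz` only log-sum-exp varies, and its derivative is `∑ Δz_k p_k = p_{y*} - ∑ p_k²`.
-/

open Finset

section Softmax

variable {V : ℕ} [NeZero V]

lemma sum_exp_pos (z : Fin V → ℝ) : 0 < ∑ l, Real.exp (z l) :=
  sum_pos (fun l _ => Real.exp_pos (z l)) univ_nonempty

lemma sum_softmax (z : Fin V → ℝ) : ∑ j, softmax z j = 1 := by
  simp only [softmax, ← sum_div]
  exact div_self (sum_exp_pos z).ne'

lemma log_mul_softmax (z : Fin V → ℝ) (j : Fin V) :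
    Real.log (V * softmax z j) = Real.log V + z j - Real.log (∑ l, Real.exp (z l)) := by
  rw [softmax, Real.log_mul (NeZero.ne (V : ℝ)) (div_pos (Real.exp_pos _) (sum_exp_pos z)).ne',
    Real.log_div (Real.exp_pos _).ne' (sum_exp_pos z).ne', Real.log_exp, add_sub_assoc]

lemma SC_softmax (z : Fin V → ℝ) :
    SC (softmax z) = Real.log (∑ l, Real.exp (z l)) - (1 / V) * ∑ j, z j - Real.log V := by
  simp only [SC, log_mul_softmax, sum_sub_distrib, sum_add_distrib, sum_const, card_univ,
    Fintype.card_fin, nsmul_eq_mul]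
  field_simp [NeZero.ne (V : ℝ)]
  ring

lemma hasDerivAt_log_sum_exp_line (z d : Fin V → ℝ) :
    HasDerivAt (fun η : ℝ => Real.log (∑ l, Real.exp (z l + η * d l)))
      (∑ l, d l * softmax z l) 0 := by
  have hline (l : Fin V) : HasDerivAt (fun η : ℝ => z l + η * d l) (d l) 0 := by
    simpa using ((hasDerivAt_id (0 : ℝ)).mul_const (d l)).const_add (z l)
  have hsum := HasDerivAt.fun_sum (u := univ) fun l _ => (hline l).exp
  convert hsum.log (by simpa using (sum_exp_pos z).ne') using 1
  simp only [zero_mul, add_zero, softmax, sum_div, mul_comm (d _), div_mul_eq_mul_div]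

lemma hasDerivAt_SC_softmax_line (z d : Fin V → ℝ) (hd : ∑ l, d l = 0) :
    HasDerivAt (fun η : ℝ => SC (softmax fun k => z k + η * d k))
      (∑ l, d l * softmax z l) 0 := by
  have hmean (η : ℝ) : ∑ j, (z j + η * d j) = ∑ j, z j := by
    rw [sum_add_distrib, ← mul_sum, hd, mul_zero, add_zero]
  simp only [SC_softmax, hmean]
  exact ((hasDerivAt_log_sum_exp_line z d).sub_const _).sub_const _

end Softmax

lemma sum_indicator_sub_mul_self {ι : Type*} [Fintype ι] [DecidableEq ι] (p : ι → ℝ) (y : ι) :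
    ∑ k, ((if k = y then 1 else 0) - p k) * p k = p y - ∑ k, p k ^ 2 := by
  simp [sub_mul, sum_sub_distrib, sq]

theorem selfCertainty_directional_deriv_general {V : ℕ} (z : Fin V → ℝ) (ystar : Fin V) :
    HasDerivAt
      (fun η : ℝ =>
        SC (softmax (fun k => z k + η * ((if k = ystar then (1 : ℝ) else 0) - softmax z k))))
      (softmax z ystar - ∑ k, (softmax z k) ^ 2) 0 := by
  have : NeZero V := ⟨ystar.pos.ne'⟩
  have hΔ : ∑ k, ((if k = ystar then (1 : ℝ) else 0) - softmax z k) = 0 := by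
    simp [sum_sub_distrib, sum_softmax]
  rw [← sum_indicator_sub_mul_self]
  exact hasDerivAt_SC_softmax_line z _ hΔ

/-- With Δz_k = δ_{k,y*} - p_k, d/dη SC(softmax(z + η Δz)) |_{η=0} = p_{y*} - Σ_k p_k². -/
theorem selfCertainty_directional_deriv {V : ℕ} (hV : 1 ≤ V) (z : Fin V → ℝ) (ystar : Fin V) :
    HasDerivAt
      (fun η : ℝ =>
        SC (softmax (fun k => z k + η * ((if k = ystar then (1 : ℝ) else 0) - softmax z k))))
      (softmax z ystar - ∑ k, (softmax z k) ^ 2) 0 :=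
  selfCertainty_directional_deriv_general z ystar
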